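/- arXiv:2306.00321 — 2 statements merged into one kernel-verified Lean document; each statement's English description precedes it below -/
import Mathlib

section
/- Under the reshaped-MDP setup, for any policy π̂, any λ and h, the suboptimality decomposes exactly as V*(d₀) − V^{π̂}(d₀) = Bias + Regret, where Bias := (γ/(1−γ)) E_{(s,a,s')∼d^{π*}}[ λ(s,s') (Ṽ^{π*}(s') − h(s')) ] and Regret := (Ṽ^{π*}(d₀) − Ṽ^{π̂}(d₀)) + (γ/(1−γ)) E_{(s,a,s')∼d^{π̂}}[ λ(s,s') (h(s') − Ṽ^{π̂}(s')) ]. Here π* is an optimal policy of the original MDP and V* its value. -/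
/-!
For a fixed policy, subtracting the reshaped Bellman equation from the original one shows that
`D = V - Ṽ` satisfies `D = γ P_π (D + λ (Ṽ - h))`. Unrolling this along the state distributions
`ρ t` gives `D(d₀) = γ ∑ₜ γᵗ E_{ρ t}[λ (Ṽ - h)]`, the tail `γᵀ E_{ρ T}[D]` vanishing because the
Markov chain does not increase the `ℓ¹` norm of `ρ t`. Applying this to `π*` and to `π̂` and
subtracting gives the decomposition.
-/

open Finset Filter Topology

theorem hasSum_pow_mul_of_eq_add_mul_succ {x g : ℕ → ℝ} {γ B : ℝ} (hγ0 : 0 ≤ γ) (hγ1 : γ < 1)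
    (hB : ∀ t, |x t| ≤ B) (hrec : ∀ t, x t = g t + γ * x (t + 1)) :
    HasSum (fun t => γ ^ t * g t) (x 0) := by
  have hpartial : ∀ T, ∑ t ∈ range T, γ ^ t * g t = x 0 - γ ^ T * x T := by
    intro T
    induction T with
    | zero => simp
    | succ T ih => rw [sum_range_succ, ih, hrec T, pow_succ]; ring
  have hγpow : Tendsto (fun T => γ ^ T) atTop (𝓝 0) :=
    tendsto_pow_atTop_nhds_zero_of_lt_one hγ0 hγ1
  have hsummable : Summable fun t => γ ^ t * g t := by
    refine Summable.of_norm_bounded ((summable_geometric_of_lt_one hγ0 hγ1).mul_left (2 * B))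
      fun t => ?_
    have hg : |g t| ≤ 2 * B := by
      rw [show g t = x t - γ * x (t + 1) by linarith [hrec t]]
      calc |x t - γ * x (t + 1)| ≤ |x t| + γ * |x (t + 1)| := by
            simpa [abs_mul, abs_of_nonneg hγ0] using abs_sub (x t) (γ * x (t + 1))
        _ ≤ 2 * B := by nlinarith [hB t, hB (t + 1), abs_nonneg (x (t + 1))]
    rw [Real.norm_eq_abs, abs_mul, abs_of_nonneg (pow_nonneg hγ0 t), mul_comm (2 * B)]
    exact mul_le_mul_of_nonneg_left hg (pow_nonneg hγ0 t)
  rw [hsummable.hasSum_iff_tendsto_nat, funext hpartial]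
  have htail : Tendsto (fun T => γ ^ T * x T) atTop (𝓝 0) :=
    squeeze_zero_norm (a := fun T => B * γ ^ T) (fun T => by
      rw [Real.norm_eq_abs, abs_mul, abs_of_nonneg (pow_nonneg hγ0 T), mul_comm]
      exact mul_le_mul_of_nonneg_right (hB T) (pow_nonneg hγ0 T))
      (by simpa using hγpow.const_mul B)
  simpa using tendsto_const_nhds.sub htail

theorem abs_sum_mul_le_sum_abs_mul_sum_abs {ι : Type*} (s : Finset ι) (f g : ι → ℝ) :
    |∑ i ∈ s, f i * g i| ≤ (∑ i ∈ s, |f i|) * ∑ i ∈ s, |g i| := by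
  calc |∑ i ∈ s, f i * g i| ≤ ∑ i ∈ s, |f i| * |g i| := by
        simpa only [abs_mul] using abs_sum_le_sum_abs (fun i => f i * g i) s
    _ ≤ ∑ i ∈ s, |f i| * ∑ j ∈ s, |g j| := by
        refine sum_le_sum fun i hi => mul_le_mul_of_nonneg_left ?_ (abs_nonneg _)
        exact single_le_sum (fun j _ => abs_nonneg (g j)) hi
    _ = (∑ i ∈ s, |f i|) * ∑ i ∈ s, |g i| := (sum_mul _ _ _).symm

section MarkovChain

variable {S A : Type*} [Fintype S] [Fintype A] {P : S → A → S → ℝ} {π : S → A → ℝ}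
  {ρ : ℕ → S → ℝ}

theorem sum_succ_mul_eq_sum_sum_sum (hρ : ∀ t s', ρ (t + 1) s' = ∑ s, ∑ a, ρ t s * π s a * P s a s')
    (t : ℕ) (f : S → ℝ) :
    ∑ s', ρ (t + 1) s' * f s' = ∑ s, ∑ a, ∑ s', ρ t s * π s a * P s a s' * f s' := by
  simp only [hρ, sum_mul]
  rw [sum_comm]
  exact sum_congr rfl fun s _ => sum_comm

theorem sum_abs_succ_le (hPnn : ∀ s a s', 0 ≤ P s a s') (hPsum : ∀ s a, ∑ s', P s a s' = 1)
    (hπnn : ∀ s a, 0 ≤ π s a) (hπsum : ∀ s, ∑ a, π s a = 1)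
    (hρ : ∀ t s', ρ (t + 1) s' = ∑ s, ∑ a, ρ t s * π s a * P s a s') (t : ℕ) :
    ∑ s, |ρ (t + 1) s| ≤ ∑ s, |ρ t s| := by
  calc ∑ s', |ρ (t + 1) s'| ≤ ∑ s', ∑ s, ∑ a, |ρ t s| * π s a * P s a s' := by
        refine sum_le_sum fun s' _ => ?_
        rw [hρ]
        refine (abs_sum_le_sum_abs _ _).trans (sum_le_sum fun s _ => ?_)
        refine (abs_sum_le_sum_abs _ _).trans_eq (sum_congr rfl fun a _ => ?_)
        rw [abs_mul, abs_mul, abs_of_nonneg (hπnn s a), abs_of_nonneg (hPnn s a s')]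
    _ = ∑ s, |ρ t s| := by
        rw [sum_comm]
        refine sum_congr rfl fun s _ => ?_
        rw [sum_comm]
        simp only [← mul_sum, hPsum, mul_one, hπsum]

theorem sum_abs_le_sum_abs_zero (hPnn : ∀ s a s', 0 ≤ P s a s') (hPsum : ∀ s a, ∑ s', P s a s' = 1)
    (hπnn : ∀ s a, 0 ≤ π s a) (hπsum : ∀ s, ∑ a, π s a = 1)
    (hρ : ∀ t s', ρ (t + 1) s' = ∑ s, ∑ a, ρ t s * π s a * P s a s') (t : ℕ) :
    ∑ s, |ρ t s| ≤ ∑ s, |ρ 0 s| := by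
  induction t with
  | zero => rfl
  | succ t ih => exact (sum_abs_succ_le hPnn hPsum hπnn hπsum hρ t).trans ih

end MarkovChain

section ReshapedMDP

variable {S A : Type*} [Fintype S] [Fintype A] {P : S → A → S → ℝ} {r : S → A → ℝ} {γ : ℝ}
  {lam : S → S → ℝ} {h : S → ℝ} {π : S → A → ℝ} {V Vt : S → ℝ}

theorem value_sub_reshapedValue (hPsum : ∀ s a, ∑ s', P s a s' = 1)
    (hV : ∀ s, V s = ∑ a, π s a * (r s a + γ * ∑ s', P s a s' * V s'))
    (hVt : ∀ s, Vt s = ∑ a, π s a * ∑ s', P s a s' *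
      (r s a + γ * lam s s' * h s' + γ * (1 - lam s s') * Vt s')) (s : S) :
    V s - Vt s = γ * ∑ a, π s a * ∑ s', P s a s' *
      ((V s' - Vt s') + lam s s' * (Vt s' - h s')) := by
  have hmean : ∀ a, r s a + γ * ∑ s', P s a s' * V s' = ∑ s', P s a s' * (r s a + γ * V s') := by
    intro a
    simp only [mul_add, sum_add_distrib, ← sum_mul, hPsum, one_mul, mul_sum]
    exact congrArg _ (sum_congr rfl fun s' _ => by ring)
  rw [hV s, hVt s]
  simp only [hmean]
  simp only [mul_sum, ← sum_sub_distrib]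
  exact sum_congr rfl fun a _ => sum_congr rfl fun s' _ => by ring

variable {ρ : ℕ → S → ℝ}

theorem sum_mul_value_sub_reshapedValue_eq (hPsum : ∀ s a, ∑ s', P s a s' = 1)
    (hV : ∀ s, V s = ∑ a, π s a * (r s a + γ * ∑ s', P s a s' * V s'))
    (hVt : ∀ s, Vt s = ∑ a, π s a * ∑ s', P s a s' *
      (r s a + γ * lam s s' * h s' + γ * (1 - lam s s') * Vt s'))
    (hρ : ∀ t s', ρ (t + 1) s' = ∑ s, ∑ a, ρ t s * π s a * P s a s') (t : ℕ) :
    ∑ s, ρ t s * (V s - Vt s) =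
      γ * ∑ s, ∑ a, ∑ s', ρ t s * π s a * P s a s' * (lam s s' * (Vt s' - h s')) +
        γ * ∑ s, ρ (t + 1) s * (V s - Vt s) := by
  conv_lhs => enter [2, s]; rw [value_sub_reshapedValue hPsum hV hVt s]
  rw [sum_succ_mul_eq_sum_sum_sum hρ, ← mul_add]
  simp only [mul_sum, ← sum_add_distrib]
  exact sum_congr rfl fun s _ => sum_congr rfl fun a _ => sum_congr rfl fun s' _ => by ring

theorem sum_mul_value_sub_sum_mul_reshapedValue {d₀ : S → ℝ} (hγ0 : 0 ≤ γ) (hγ1 : γ < 1)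
    (hPnn : ∀ s a s', 0 ≤ P s a s') (hPsum : ∀ s a, ∑ s', P s a s' = 1)
    (hπnn : ∀ s a, 0 ≤ π s a) (hπsum : ∀ s, ∑ a, π s a = 1)
    (hV : ∀ s, V s = ∑ a, π s a * (r s a + γ * ∑ s', P s a s' * V s'))
    (hVt : ∀ s, Vt s = ∑ a, π s a * ∑ s', P s a s' *
      (r s a + γ * lam s s' * h s' + γ * (1 - lam s s') * Vt s'))
    (hρ0 : ∀ s, ρ 0 s = d₀ s)
    (hρ : ∀ t s', ρ (t + 1) s' = ∑ s, ∑ a, ρ t s * π s a * P s a s') :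
    (∑ s, d₀ s * V s) - ∑ s, d₀ s * Vt s =
      γ * ∑' t : ℕ, γ ^ t *
        ∑ s, ∑ a, ∑ s', ρ t s * π s a * P s a s' * (lam s s' * (Vt s' - h s')) := by
  have hbounded : ∀ t, |∑ s, ρ t s * (V s - Vt s)| ≤ (∑ s, |ρ 0 s|) * ∑ s, |V s - Vt s| :=
    fun t => (abs_sum_mul_le_sum_abs_mul_sum_abs _ _ _).trans <|
      mul_le_mul_of_nonneg_right (sum_abs_le_sum_abs_zero hPnn hPsum hπnn hπsum hρ t)
        (sum_nonneg fun s _ => abs_nonneg _)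
  have hsum := (hasSum_pow_mul_of_eq_add_mul_succ hγ0 hγ1 hbounded
    (sum_mul_value_sub_reshapedValue_eq hPsum hV hVt hρ)).tsum_eq
  calc (∑ s, d₀ s * V s) - ∑ s, d₀ s * Vt s = ∑ s, ρ 0 s * (V s - Vt s) := by
        simp only [hρ0, mul_sub, sum_sub_distrib]
    _ = _ := by
        rw [← hsum, ← tsum_mul_left]
        exact tsum_congr fun t => by ring

end ReshapedMDP

theorem hubl_bias_regret_decomposition_general
    {S A : Type*} [Fintype S] [Fintype A]
    (P : S → A → S → ℝ) (r : S → A → ℝ)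
    (γ : ℝ) (hγ0 : 0 ≤ γ) (hγ1 : γ < 1)
    (lam : S → S → ℝ)
    (h : S → ℝ)
    (hPnn : ∀ s a s', 0 ≤ P s a s') (hPsum : ∀ s a, ∑ s', P s a s' = 1)
    (d₀ : S → ℝ)
    (πstar πhat : S → A → ℝ)
    (hπsnn : ∀ s a, 0 ≤ πstar s a) (hπssum : ∀ s, ∑ a, πstar s a = 1)
    (hπhnn : ∀ s a, 0 ≤ πhat s a) (hπhsum : ∀ s, ∑ a, πhat s a = 1)
    (Vstar Vhat Vtstar Vthat : S → ℝ)
    (hVstar : ∀ s, Vstar s = ∑ a, πstar s a *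
      (r s a + γ * ∑ s', P s a s' * Vstar s'))
    (hVhat : ∀ s, Vhat s = ∑ a, πhat s a *
      (r s a + γ * ∑ s', P s a s' * Vhat s'))
    (hVtstar : ∀ s, Vtstar s = ∑ a, πstar s a * ∑ s', P s a s' *
      (r s a + γ * lam s s' * h s' + γ * (1 - lam s s') * Vtstar s'))
    (hVthat : ∀ s, Vthat s = ∑ a, πhat s a * ∑ s', P s a s' *
      (r s a + γ * lam s s' * h s' + γ * (1 - lam s s') * Vthat s'))
    (ρstar ρhat : ℕ → S → ℝ)
    (hρs0 : ∀ s, ρstar 0 s = d₀ s)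
    (hρs : ∀ t s', ρstar (t + 1) s' = ∑ s, ∑ a, ρstar t s * πstar s a * P s a s')
    (hρh0 : ∀ s, ρhat 0 s = d₀ s)
    (hρh : ∀ t s', ρhat (t + 1) s' = ∑ s, ∑ a, ρhat t s * πhat s a * P s a s') :
    (∑ s, d₀ s * Vstar s) - (∑ s, d₀ s * Vhat s) =
      -- Bias
      ((γ / (1 - γ)) * ((1 - γ) * ∑' t : ℕ, γ ^ t *
        ∑ s, ∑ a, ∑ s', ρstar t s * πstar s a * P s a s' *
          (lam s s' * (Vtstar s' - h s'))))
      +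
      -- Regret
      (((∑ s, d₀ s * Vtstar s) - (∑ s, d₀ s * Vthat s))
        + (γ / (1 - γ)) * ((1 - γ) * ∑' t : ℕ, γ ^ t *
            ∑ s, ∑ a, ∑ s', ρhat t s * πhat s a * P s a s' *
              (lam s s' * (h s' - Vthat s')))) := by
  have hstar := sum_mul_value_sub_sum_mul_reshapedValue hγ0 hγ1 hPnn hPsum hπsnn hπssum
    hVstar hVtstar hρs0 hρs
  have hhat := sum_mul_value_sub_sum_mul_reshapedValue hγ0 hγ1 hPnn hPsum hπhnn hπhsum
    hVhat hVthat hρh0 hρh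
  have hflip : ∀ s s', lam s s' * (h s' - Vthat s') = -(lam s s' * (Vthat s' - h s')) :=
    fun _ _ => by ring
  have hcancel : ∀ x, γ / (1 - γ) * ((1 - γ) * x) = γ * x := fun x => by
    field_simp [show (1 : ℝ) - γ ≠ 0 by linarith]
  simp only [hflip, mul_neg, sum_neg_distrib, tsum_neg, hcancel]
  linarith

/-- Bias-regret decomposition (Theorem 1 of HUBL).
Finite MDP with transition `P`, reward `r`, discount `γ ∈ [0,1)`, initial
distribution `d₀`.  `πstar` is an optimal policy with value `Vstar`, `πhat` any
policy with value `Vhat`.  Reshaped MDP: `r̃(s,a) = r(s,a) + γ E[λ h]`,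
`γ̃(s,s') = γ(1−λ(s,s'))`, with reshaped values `Vtstar`, `Vthat` of `πstar`,
`πhat`.  `ρstar, ρhat` are the time-`t` state distributions of the two policies
started from `d₀`.  Then `V*(d₀) − V^{π̂}(d₀) = Bias + Regret` with
`Bias = (γ/(1−γ)) E_{d^{π*}}[λ(s,s')(Ṽ^{π*}(s') − h(s'))]` and
`Regret = Ṽ^{π*}(d₀) − Ṽ^{π̂}(d₀) + (γ/(1−γ)) E_{d^{π̂}}[λ(s,s')(h(s') − Ṽ^{π̂}(s'))]`. -/
theorem hubl_bias_regret_decomposition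
    {S A : Type*} [Fintype S] [Fintype A]
    (P : S → A → S → ℝ) (r : S → A → ℝ)
    (γ : ℝ) (hγ0 : 0 ≤ γ) (hγ1 : γ < 1)
    (lam : S → S → ℝ) (hlam : ∀ s s', lam s s' ∈ Set.Icc (0 : ℝ) 1)
    (h : S → ℝ)
    (hPnn : ∀ s a s', 0 ≤ P s a s') (hPsum : ∀ s a, ∑ s', P s a s' = 1)
    (d₀ : S → ℝ) (hd₀nn : ∀ s, 0 ≤ d₀ s) (hd₀sum : ∑ s, d₀ s = 1)
    (πstar πhat : S → A → ℝ)
    (hπsnn : ∀ s a, 0 ≤ πstar s a) (hπssum : ∀ s, ∑ a, πstar s a = 1)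
    (hπhnn : ∀ s a, 0 ≤ πhat s a) (hπhsum : ∀ s, ∑ a, πhat s a = 1)
    (Vstar Vhat Vtstar Vthat : S → ℝ)
    (hVstar : ∀ s, Vstar s = ∑ a, πstar s a *
      (r s a + γ * ∑ s', P s a s' * Vstar s'))
    (hVhat : ∀ s, Vhat s = ∑ a, πhat s a *
      (r s a + γ * ∑ s', P s a s' * Vhat s'))
    -- optimality of πstar: its value dominates that of every policy
    (hopt : ∀ (π' : S → A → ℝ) (V' : S → ℝ),
      (∀ s a, 0 ≤ π' s a) → (∀ s, ∑ a, π' s a = 1) →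
      (∀ s, V' s = ∑ a, π' s a * (r s a + γ * ∑ s', P s a s' * V' s')) →
      ∀ s, V' s ≤ Vstar s)
    (hVtstar : ∀ s, Vtstar s = ∑ a, πstar s a * ∑ s', P s a s' *
      (r s a + γ * lam s s' * h s' + γ * (1 - lam s s') * Vtstar s'))
    (hVthat : ∀ s, Vthat s = ∑ a, πhat s a * ∑ s', P s a s' *
      (r s a + γ * lam s s' * h s' + γ * (1 - lam s s') * Vthat s'))
    (ρstar ρhat : ℕ → S → ℝ)
    (hρs0 : ∀ s, ρstar 0 s = d₀ s)
    (hρs : ∀ t s', ρstar (t + 1) s' = ∑ s, ∑ a, ρstar t s * πstar s a * P s a s')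
    (hρh0 : ∀ s, ρhat 0 s = d₀ s)
    (hρh : ∀ t s', ρhat (t + 1) s' = ∑ s, ∑ a, ρhat t s * πhat s a * P s a s') :
    (∑ s, d₀ s * Vstar s) - (∑ s, d₀ s * Vhat s) =
      -- Bias
      ((γ / (1 - γ)) * ((1 - γ) * ∑' t : ℕ, γ ^ t *
        ∑ s, ∑ a, ∑ s', ρstar t s * πstar s a * P s a s' *
          (lam s s' * (Vtstar s' - h s'))))
      +
      -- Regret
      (((∑ s, d₀ s * Vtstar s) - (∑ s, d₀ s * Vthat s))
        + (γ / (1 - γ)) * ((1 - γ) * ∑' t : ℕ, γ ^ t *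
            ∑ s, ∑ a, ∑ s', ρhat t s * πhat s a * P s a s' *
              (lam s s' * (h s' - Vthat s')))) :=
  hubl_bias_regret_decomposition_general P r γ hγ0 hγ1 lam h hPnn hPsum d₀ πstar πhat hπsnn hπssum
    hπhnn hπhsum Vstar Vhat Vtstar Vthat hVstar hVhat hVtstar hVthat ρstar ρhat hρs0 hρs hρh0 hρh
end

section
/- Sandwich for the reshaped optimal value with behavior-policy heuristic: In a finite MDP with constant λ ∈ [0,1], if h = V^μ for a behavior policy μ (so V^μ ≤ V* pointwise), then the reshaped value of the optimal policy satisfies, for all s: Ṽ^{π*}(s) ≥ V*(s) − (γλ/(1−γ(1−λ))) ‖V* − V^μ‖_∞ and Ṽ^{π*}(s) ≤ V*(s). Hence ‖V* − Ṽ^{π*}‖_∞ ≤ (γλ/(1−γ(1−λ))) ‖V* − V^μ‖_∞. -/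
/-!
The gap `D = V* − Ṽ^{π*}` solves the fixed-point equation
`D = Kπ (γλ (V* − V^μ) + γ(1−λ) D)` for the one-step state kernel `Kπ` of `π*`, whose forcing
term `γλ (V* − V^μ)` lies in `[0, γλ ‖V* − V^μ‖_∞]`. A maximum principle for such equations
(evaluate at a state where `D` is minimal, resp. maximal) gives
`0 ≤ D ≤ γλ ‖V* − V^μ‖_∞ / (1 − γ(1−λ))`.
-/

open Finset

section WeightedAverage

variable {ι R : Type*} [Fintype ι] [Semiring R] [PartialOrder R] [IsOrderedRing R]
  {w f : ι → R} {c : R}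

lemma sum_mul_le_of_le (hw : ∀ i, 0 ≤ w i) (hw1 : ∑ i, w i = 1) (hf : ∀ i, f i ≤ c) :
    ∑ i, w i * f i ≤ c :=
  calc ∑ i, w i * f i ≤ ∑ i, w i * c :=
        sum_le_sum fun i _ => mul_le_mul_of_nonneg_left (hf i) (hw i)
    _ = c := by rw [← sum_mul, hw1, one_mul]

lemma le_sum_mul_of_le (hw : ∀ i, 0 ≤ w i) (hw1 : ∑ i, w i = 1) (hf : ∀ i, c ≤ f i) :
    c ≤ ∑ i, w i * f i :=
  calc c = ∑ i, w i * c := by rw [← sum_mul, hw1, one_mul]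
    _ ≤ ∑ i, w i * f i := sum_le_sum fun i _ => mul_le_mul_of_nonneg_left (hf i) (hw i)

lemma add_mul_sum_eq_sum_mul_add {R : Type*} [CommSemiring R] {w : ι → R} (hw1 : ∑ i, w i = 1)
    (x y : R) (f : ι → R) : x + y * ∑ i, w i * f i = ∑ i, w i * (x + y * f i) := by
  simp only [mul_add, sum_add_distrib, ← sum_mul, hw1, one_mul, mul_sum, mul_left_comm]

end WeightedAverage

section MaximumPrinciple

variable {S : Type*} [Fintype S] {K : S → S → ℝ} {g D : S → ℝ} {c : ℝ}

lemma nonneg_of_eq_stochastic_sum (hK : ∀ s s', 0 ≤ K s s') (hK1 : ∀ s, ∑ s', K s s' = 1)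
    (hc0 : 0 ≤ c) (hc1 : c < 1) (hg : ∀ s, 0 ≤ g s)
    (hD : ∀ s, D s = ∑ s', K s s' * (g s' + c * D s')) (s : S) : 0 ≤ D s := by
  obtain ⟨s₀, -, hs₀⟩ := exists_min_image univ D ⟨s, mem_univ s⟩
  have hmin : ∀ s', D s₀ ≤ D s' := fun s' => hs₀ s' (mem_univ s')
  have : c * D s₀ ≤ D s₀ := by
    conv_rhs => rw [hD s₀]
    refine le_sum_mul_of_le (hK s₀) (hK1 s₀) fun s' => ?_
    nlinarith [hg s', hmin s']
  nlinarith [hmin s]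

lemma le_div_of_eq_stochastic_sum (hK : ∀ s s', 0 ≤ K s s') (hK1 : ∀ s, ∑ s', K s s' = 1)
    (hc0 : 0 ≤ c) (hc1 : c < 1) {B : ℝ} (hg : ∀ s, g s ≤ B)
    (hD : ∀ s, D s = ∑ s', K s s' * (g s' + c * D s')) (s : S) : D s ≤ B / (1 - c) := by
  obtain ⟨s₁, -, hs₁⟩ := exists_max_image univ D ⟨s, mem_univ s⟩
  have hmax : ∀ s', D s' ≤ D s₁ := fun s' => hs₁ s' (mem_univ s')
  have : D s₁ ≤ B + c * D s₁ := by
    conv_lhs => rw [hD s₁]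
    refine sum_mul_le_of_le (hK s₁) (hK1 s₁) fun s' => ?_
    nlinarith [hg s', hmax s']
  rw [le_div_iff₀ (by linarith)]
  nlinarith [hmax s]

end MaximumPrinciple

section PolicyKernel

variable {S A : Type*} [Fintype A] (π : S → A → ℝ) (P : S → A → S → ℝ)

def policyKernel (s s' : S) : ℝ := ∑ a, π s a * P s a s'

variable {π P}

lemma policyKernel_nonneg (hπ : ∀ s a, 0 ≤ π s a) (hP : ∀ s a s', 0 ≤ P s a s') (s s' : S) :
    0 ≤ policyKernel π P s s' :=
  sum_nonneg fun a _ => mul_nonneg (hπ s a) (hP s a s')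

lemma sum_policyKernel [Fintype S] (hπ1 : ∀ s, ∑ a, π s a = 1)
    (hP1 : ∀ s a, ∑ s', P s a s' = 1) (s : S) :
    ∑ s', policyKernel π P s s' = 1 := by
  simp only [policyKernel]
  rw [sum_comm]
  simp only [← mul_sum, hP1, mul_one, hπ1]

lemma sum_policy_mul_sum_transition [Fintype S] (f : S → ℝ) (s : S) :
    ∑ a, π s a * ∑ s', P s a s' * f s' = ∑ s', policyKernel π P s s' * f s' := by
  simp only [policyKernel, mul_sum, sum_mul, mul_assoc]
  exact sum_comm

end PolicyKernel

theorem hubl_reshaped_value_sandwich_general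
    {S A : Type*} [Fintype S] [Fintype A] [Nonempty S]
    (P : S → A → S → ℝ) (r : S → A → ℝ)
    (γ : ℝ) (hγ0 : 0 ≤ γ)
    (lam : ℝ) (hlam : lam ∈ Set.Icc (0 : ℝ) 1)
    (hγlam : γ * (1 - lam) < 1)
    (πstar : S → A → ℝ) (hπnn : ∀ s a, 0 ≤ πstar s a)
    (hπsum : ∀ s, ∑ a, πstar s a = 1)
    (hPnn : ∀ s a s', 0 ≤ P s a s') (hPsum : ∀ s a, ∑ s', P s a s' = 1)
    (Vstar Vμ Vtstar : S → ℝ)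
    (hVstar : ∀ s, Vstar s = ∑ a, πstar s a *
      (r s a + γ * ∑ s', P s a s' * Vstar s'))
    (hμle : ∀ s, Vμ s ≤ Vstar s)
    -- reshaped value of π* with heuristic h = V^μ
    (hVtstar : ∀ s, Vtstar s = ∑ a, πstar s a * ∑ s', P s a s' *
      (r s a + γ * lam * Vμ s' + γ * (1 - lam) * Vtstar s')) :
    (∀ s, Vstar s - (γ * lam / (1 - γ * (1 - lam))) *
        Finset.univ.sup' Finset.univ_nonempty (fun s' => |Vstar s' - Vμ s'|)
        ≤ Vtstar s)
    ∧ (∀ s, Vtstar s ≤ Vstar s)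
    ∧ (∀ s, |Vstar s - Vtstar s| ≤ (γ * lam / (1 - γ * (1 - lam))) *
        Finset.univ.sup' Finset.univ_nonempty (fun s' => |Vstar s' - Vμ s'|))
    := by
  set M := univ.sup' univ_nonempty fun s' => |Vstar s' - Vμ s'|
  set D := fun s => Vstar s - Vtstar s
  obtain ⟨hlam0, hlam1⟩ := hlam
  have hgap : ∀ s, D s = ∑ s', policyKernel πstar P s s' *
      (γ * lam * (Vstar s' - Vμ s') + γ * (1 - lam) * D s') := fun s => by
    rw [← sum_policy_mul_sum_transition]
    simp only [D, hVstar s, hVtstar s, add_mul_sum_eq_sum_mul_add (hPsum s _), ← sum_sub_distrib,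
      ← mul_sub]
    exact sum_congr rfl fun a _ => congrArg _ (sum_congr rfl fun s' _ => by ring)
  have hK := policyKernel_nonneg hπnn hPnn
  have hK1 := sum_policyKernel hπsum hPsum
  have hc0 : 0 ≤ γ * (1 - lam) := mul_nonneg hγ0 (by linarith)
  have hD0 := nonneg_of_eq_stochastic_sum hK hK1 hc0 hγlam
    (fun s => mul_nonneg (mul_nonneg hγ0 hlam0) (sub_nonneg.2 (hμle s))) hgap
  have hgapM : ∀ s, Vstar s - Vμ s ≤ M := fun s =>
    (le_abs_self _).trans (le_sup' (fun s' => |Vstar s' - Vμ s'|) (mem_univ s))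
  have hDle := le_div_of_eq_stochastic_sum hK hK1 hc0 hγlam
    (fun s => mul_le_mul_of_nonneg_left (hgapM s) (mul_nonneg hγ0 hlam0)) hgap
  simp only [D, div_mul_eq_mul_div] at hD0 hDle ⊢
  refine ⟨fun s => ?_, fun s => sub_nonneg.1 (hD0 s), fun s => ?_⟩
  · linarith [hDle s]
  · rw [abs_of_nonneg (hD0 s)]
    exact hDle s

/-- Sandwich for the reshaped optimal value with the
behavior-policy heuristic.  Constant `λ ∈ [0,1]`, `h = V^μ ≤ V*` pointwise.
Then for all `s`:
`V*(s) − (γλ/(1−γ(1−λ)))‖V*−V^μ‖_∞ ≤ Ṽ^{π*}(s) ≤ V*(s)`, hence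
`‖V* − Ṽ^{π*}‖_∞ ≤ (γλ/(1−γ(1−λ)))‖V*−V^μ‖_∞`. -/
theorem hubl_reshaped_value_sandwich
    {S A : Type*} [Fintype S] [Fintype A] [Nonempty S]
    (P : S → A → S → ℝ) (r : S → A → ℝ)
    (γ : ℝ) (hγ0 : 0 ≤ γ) (hγ1 : γ < 1)
    (lam : ℝ) (hlam : lam ∈ Set.Icc (0 : ℝ) 1)
    (hγlam : γ * (1 - lam) < 1)
    (πstar : S → A → ℝ) (hπnn : ∀ s a, 0 ≤ πstar s a)
    (hπsum : ∀ s, ∑ a, πstar s a = 1)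
    (hPnn : ∀ s a s', 0 ≤ P s a s') (hPsum : ∀ s a, ∑ s', P s a s' = 1)
    (Vstar Vμ Vtstar : S → ℝ)
    (hVstar : ∀ s, Vstar s = ∑ a, πstar s a *
      (r s a + γ * ∑ s', P s a s' * Vstar s'))
    (hμle : ∀ s, Vμ s ≤ Vstar s)
    -- reshaped value of π* with heuristic h = V^μ
    (hVtstar : ∀ s, Vtstar s = ∑ a, πstar s a * ∑ s', P s a s' *
      (r s a + γ * lam * Vμ s' + γ * (1 - lam) * Vtstar s')) :
    (∀ s, Vstar s - (γ * lam / (1 - γ * (1 - lam))) *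
        Finset.univ.sup' Finset.univ_nonempty (fun s' => |Vstar s' - Vμ s'|)
        ≤ Vtstar s)
    ∧ (∀ s, Vtstar s ≤ Vstar s)
    ∧ (∀ s, |Vstar s - Vtstar s| ≤ (γ * lam / (1 - γ * (1 - lam))) *
        Finset.univ.sup' Finset.univ_nonempty (fun s' => |Vstar s' - Vμ s'|)) :=
  hubl_reshaped_value_sandwich_general P r γ hγ0 lam hlam hγlam πstar hπnn hπsum hPnn hPsum Vstar Vμ
    Vtstar hVstar hμle hVtstar
end
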